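/- arXiv:2304.12838 — 2 statements merged into one kernel-verified Lean document; each statement's English description precedes it below -/
import Mathlib

section
/- For λ > 0, the limit as r → 1⁻ of I_λ(r) = (1/2π) ∫₀^{2π} (1-r²)^λ / |1 - r e^{-iθ}|^{λ+1} dθ equals Γ(λ)/Γ(λ/2 + 1/2)². -/
noncomputable section

open Complex MeasureTheory intervalIntegral Real Filter

/-- Wirtinger derivative ∂_z = (∂_x − i∂_y)/2. -/
def wdz (u : ℂ → ℂ) (z : ℂ) : ℂ :=
  (fderiv ℝ u z 1 - Complex.I * fderiv ℝ u z Complex.I) / 2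

/-- Wirtinger derivative ∂_z̄ = (∂_x + i∂_y)/2. -/
def wdzbar (u : ℂ → ℂ) (z : ℂ) : ℂ :=
  (fderiv ℝ u z 1 + Complex.I * fderiv ℝ u z Complex.I) / 2

/-- The kernel K_{α,β}(z) = (1-|z|²)^{α+β+1} / ((1-z)^{α+1}(1-z̄)^{β+1}). -/
def Kab (a b : ℝ) (z : ℂ) : ℂ :=
  ((1 - ‖z‖ ^ 2 : ℂ) ^ ((a + b + 1 : ℝ) : ℂ)) /
    ((1 - z) ^ ((a + 1 : ℝ) : ℂ) * (1 - (starRingEnd ℂ) z) ^ ((b + 1 : ℝ) : ℂ))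

/-- The constant c_{α,β} = Γ(α+1)Γ(β+1)/Γ(α+β+1). -/
def cab (a b : ℝ) : ℝ := Real.Gamma (a + 1) * Real.Gamma (b + 1) / Real.Gamma (a + b + 1)

/-- The kernel integral K_{a,b}[f](z) = (1/2π)∫₀^{2π} K_{a,b}(z e^{-it}) f(e^{it}) dt. -/
def Kint (a b : ℝ) (f : ℝ → ℂ) (z : ℂ) : ℂ :=
  ((1 / (2 * π) : ℝ) : ℂ) *
    ∫ t in (0:ℝ)..(2 * π), Kab a b (z * Complex.exp (-(t : ℂ) * Complex.I)) * f t

/-- The (α,β)-harmonic Poisson integral P_{α,β}[f] = c_{α,β} K_{α,β}[f]. -/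
def Pab (a b : ℝ) (f : ℝ → ℂ) (z : ℂ) : ℂ := (cab a b : ℂ) * Kint a b f z

/-- I_λ(r) = (1/2π)∫₀^{2π} (1-r²)^λ / |1-re^{-iθ}|^{λ+1} dθ. -/
def Ilam (lam r : ℝ) : ℝ :=
  (1 / (2 * π)) * ∫ θ in (0:ℝ)..(2 * π),
    (1 - r ^ 2) ^ lam / ‖1 - (r : ℂ) * Complex.exp (-(θ : ℂ) * Complex.I)‖ ^ (lam + 1)

/-- Integral mean M_p(r,v). -/
def Mp (p r : ℝ) (v : ℂ → ℂ) : ℝ :=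
  ((1 / (2 * π)) * ∫ θ in (0:ℝ)..(2 * π),
      ‖v ((r : ℂ) * Complex.exp ((θ : ℂ) * Complex.I))‖ ^ p) ^ (1 / p)

/-- L^p norm on the circle (normalized). -/
def nLp (p : ℝ) (f : ℝ → ℂ) : ℝ :=
  ((1 / (2 * π)) * ∫ θ in (0:ℝ)..(2 * π), ‖f θ‖ ^ p) ^ (1 / p)

/-- Membership in the generalized Hardy space H^p_G(𝔻). -/
def MemHG (p : ℝ) (v : ℂ → ℂ) : Prop :=
  ∃ C : ℝ, ∀ r ∈ Set.Ioo (0:ℝ) 1, Mp p r v ≤ C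

/-- x is not a negative integer. -/
def NotNegInt (x : ℝ) : Prop := ∀ n : ℕ, x ≠ -(n + 1 : ℝ)

/-- f (as a 2π-periodic function of θ, representing a function on 𝕋) is absolutely
continuous with angular derivative fdot ∈ L¹. -/
def CircleAC (f fdot : ℝ → ℂ) : Prop :=
  Function.Periodic f (2 * π) ∧ (∀ θ : ℝ, f θ = f 0 + ∫ t in (0:ℝ)..θ, fdot t) ∧
    IntervalIntegrable fdot MeasureTheory.volume 0 (2 * π)

/-- Pochhammer symbol (x)_n. -/
def ascP (x : ℝ) (n : ℕ) : ℝ := Polynomial.eval x (ascPochhammer ℝ n)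

/-- Gaussian hypergeometric function F(a,b;c;x). -/
def hyperF (a b c x : ℝ) : ℝ :=
  ∑' n : ℕ, ascP a n * ascP b n / (ascP c n * (n.factorial : ℝ)) * x ^ n

/-!
Substituting `θ = (1 - r) t` on `[-π, π]` turns `Ilam lam r` into `1 / (2π)` times the integral
over `|t| ≤ π / (1 - r)` of `(1 + r) ^ λ (1 + r t² sinc² ((1 - r) t / 2)) ^ (-(λ + 1) / 2)`.
Jordan's inequality `|sinc x| ≥ 2 / π` for `|x| ≤ π / 2` dominates this integrand by a multiple
of `(1 + t²) ^ (-(λ + 1) / 2)`, so by dominated convergence the limit is `2 ^ λ / (2π)` times the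
Beta integral `∫ (1 + t²) ^ (-(λ + 1) / 2) dt = √π Γ(λ/2) / Γ((λ + 1)/2)`. The duplication
formula turns this into `Γ(λ) / Γ(λ/2 + 1/2)²`.
-/

open Set Topology

lemma integral_Ioo_rpow_mul_one_sub_rpow {a b : ℝ} (ha : 0 < a) (hb : 0 < b) :
    ∫ x in Ioo (0 : ℝ) 1, x ^ (a - 1) * (1 - x) ^ (b - 1) =
      Real.Gamma a * Real.Gamma b / Real.Gamma (a + b) := by
  have hβ := Complex.betaIntegral_eq_Gamma_mul_div a b (by simpa) (by simpa)
  rw [← Complex.ofReal_add, Complex.Gamma_ofReal, Complex.Gamma_ofReal, Complex.Gamma_ofReal,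
    Complex.betaIntegral, intervalIntegral.integral_of_le zero_le_one] at hβ
  rw [← integral_Ioc_eq_integral_Ioo]
  have hcongr : ∫ x in Ioc (0 : ℝ) 1, ((x ^ (a - 1) * (1 - x) ^ (b - 1) : ℝ) : ℂ) =
      ∫ x in Ioc (0 : ℝ) 1, (x : ℂ) ^ ((a : ℂ) - 1) * (1 - (x : ℂ)) ^ ((b : ℂ) - 1) :=
    setIntegral_congr_fun measurableSet_Ioc fun x hx => by
      rw [Complex.ofReal_mul, Complex.ofReal_cpow hx.1.le, Complex.ofReal_cpow (sub_nonneg.2 hx.2)]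
      push_cast
      rfl
  have h := hcongr.trans hβ
  rw [integral_complex_ofReal] at h
  exact_mod_cast h

lemma integral_Ioi_rpow_mul_one_add_rpow_neg {a b : ℝ} (ha : 0 < a) (hb : 0 < b) :
    ∫ x in Ioi (0 : ℝ), x ^ (a - 1) * (1 + x) ^ (-(a + b)) =
      Real.Gamma a * Real.Gamma b / Real.Gamma (a + b) := by
  set φ : ℝ → ℝ := fun x => x / (1 + x)
  have hφ' : ∀ x ∈ Ioi (0 : ℝ), HasDerivWithinAt φ (1 / (1 + x) ^ 2) (Ioi 0) x :=
    fun x hx => by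
      have hx : 1 + x ≠ 0 := by linarith [mem_Ioi.1 hx]
      refine HasDerivAt.hasDerivWithinAt <|
        ((hasDerivAt_id x).div ((hasDerivAt_id x).const_add 1) hx).congr_deriv ?_
      simp only [id]
      field_simp
      ring
  have hinj : InjOn φ (Ioi 0) := fun x hx y hy hxy => by
    have := mem_Ioi.1 hx; have := mem_Ioi.1 hy
    simp only [φ] at hxy
    field_simp at hxy
    linarith
  have himage : φ '' Ioi 0 = Ioo 0 1 := by
    ext u
    refine ⟨?_, fun hu => ⟨u / (1 - u), div_pos hu.1 (sub_pos.2 hu.2), ?_⟩⟩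
    · rintro ⟨x, hx, rfl⟩
      have := mem_Ioi.1 hx
      exact ⟨by positivity, (div_lt_one (by linarith)).2 (by linarith)⟩
    · have := sub_pos.2 hu.2
      simp only [φ]
      field_simp
      ring
  rw [← integral_Ioo_rpow_mul_one_sub_rpow ha hb, ← himage,
    integral_image_eq_integral_abs_deriv_smul measurableSet_Ioi hφ' hinj]
  refine setIntegral_congr_fun measurableSet_Ioi fun x hx => ?_
  have hx : 0 < x := hx
  have hq : 0 < 1 + x := by linarith
  have h1φ : 1 - φ x = (1 + x)⁻¹ := by simp only [φ]; field_simp; ring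
  have hexp : (1 + x) ^ (-(a + b)) =
      (1 + x) ^ (-(b - 1)) / (1 + x) ^ (a - 1) / (1 + x) ^ 2 := by
    rw [← Real.rpow_sub hq, ← Real.rpow_two, ← Real.rpow_sub hq]
    ring_nf
  rw [smul_eq_mul, h1φ, abs_of_pos (by positivity), Real.div_rpow hx.le hq.le,
    Real.inv_rpow hq.le, ← Real.rpow_neg hq.le, hexp]
  ring

lemma integral_one_add_sq_rpow_neg {r : ℝ} (hr : 1 < r) :
    ∫ t : ℝ, (1 + t ^ 2) ^ (-r / 2) =
      √π * Real.Gamma ((r - 1) / 2) / Real.Gamma (r / 2) := by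
  have hhalf : ∫ t in Ioi (0 : ℝ), (1 + t ^ 2) ^ (-r / 2) = 1 / 2 *
      ∫ x in Ioi (0 : ℝ), x ^ (1 / 2 - 1 : ℝ) * (1 + x) ^ (-(1 / 2 + (r - 1) / 2)) := by
    rw [← integral_comp_rpow_Ioi_of_pos (g := fun t : ℝ => (1 + t ^ 2) ^ (-r / 2))
      one_half_pos, ← MeasureTheory.integral_const_mul]
    refine setIntegral_congr_fun measurableSet_Ioi fun x (hx : 0 < x) => ?_
    have hsq : (x ^ (1 / 2 : ℝ)) ^ 2 = x := by rw [← Real.sqrt_eq_rpow, Real.sq_sqrt hx.le]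
    rw [smul_eq_mul, hsq, show -(1 / 2 + (r - 1) / 2) = -r / 2 by ring]
    ring
  calc ∫ t : ℝ, (1 + t ^ 2) ^ (-r / 2)
      = ∫ t : ℝ, (fun x : ℝ => (1 + x ^ 2) ^ (-r / 2)) |t| := by simp only [sq_abs]
    _ = √π * Real.Gamma ((r - 1) / 2) / Real.Gamma (r / 2) := by
      rw [integral_comp_abs (f := fun x : ℝ => (1 + x ^ 2) ^ (-r / 2)), hhalf,
        integral_Ioi_rpow_mul_one_add_rpow_neg (a := 1 / 2) (b := (r - 1) / 2) one_half_pos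
          (by linarith), Real.Gamma_one_half_eq]
      ring_nf

lemma Real.sin_eq_mul_sinc (x : ℝ) : Real.sin x = x * Real.sinc x := by
  rcases eq_or_ne x 0 with rfl | hx
  · simp
  · rw [Real.sinc_of_ne_zero hx, mul_div_cancel₀ _ hx]

lemma Real.two_div_pi_le_abs_sinc {x : ℝ} (hx : |x| ≤ π / 2) : 2 / π ≤ |Real.sinc x| := by
  rcases eq_or_ne x 0 with rfl | hx0
  · rw [Real.sinc_zero, abs_one, div_le_one pi_pos]
    exact two_le_pi
  · rw [Real.sinc_of_ne_zero hx0, abs_div, le_div_iff₀ (abs_pos.2 hx0)]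
    exact Real.mul_abs_le_abs_sin hx

lemma norm_one_sub_mul_exp_neg_mul_I_sq (r θ : ℝ) :
    ‖1 - (r : ℂ) * Complex.exp (-(θ : ℂ) * Complex.I)‖ ^ 2 =
      (1 - r) ^ 2 + 4 * r * Real.sin (θ / 2) ^ 2 := by
  have hθ : -(θ : ℂ) * Complex.I = ((-θ : ℝ) : ℂ) * Complex.I := by push_cast; ring
  have hcos : Real.cos θ = Real.cos (θ / 2) ^ 2 - Real.sin (θ / 2) ^ 2 := by
    rw [← Real.cos_two_mul', mul_div_cancel₀ θ two_ne_zero]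
  rw [Complex.sq_norm, Complex.normSq_apply, hθ]
  simp only [Complex.sub_re, Complex.sub_im, Complex.one_re, Complex.one_im, Complex.mul_re,
    Complex.mul_im, Complex.ofReal_re, Complex.ofReal_im, Complex.exp_ofReal_mul_I_re,
    Complex.exp_ofReal_mul_I_im, Real.cos_neg, Real.sin_neg]
  linear_combination r ^ 2 * Real.sin_sq_add_cos_sq θ - 2 * r * hcos
    - 2 * r * Real.sin_sq_add_cos_sq (θ / 2)

/-- The integrand of `Ilam lam r` at `θ = (1 - r) * t`, multiplied by `1 - r`; written with `sinc`
so that it stays continuous in `r` up to `r = 1`. -/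
def rescaledIntegrand (lam r t : ℝ) : ℝ :=
  (1 + r) ^ lam * (1 + r * t ^ 2 * Real.sinc ((1 - r) * t / 2) ^ 2) ^ (-(lam + 1) / 2)

lemma one_sub_mul_integrand_eq_rescaledIntegrand {r : ℝ} (hr0 : 0 ≤ r) (hr1 : r < 1)
    (lam t : ℝ) :
    (1 - r) * ((1 - r ^ 2) ^ lam /
      ‖1 - (r : ℂ) * Complex.exp (-(((1 - r) * t : ℝ) : ℂ) * Complex.I)‖ ^ (lam + 1)) =
      rescaledIntegrand lam r t := by
  set ε := 1 - r
  set B := 1 + r * t ^ 2 * Real.sinc (ε * t / 2) ^ 2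
  have hε : 0 < ε := sub_pos.2 hr1
  have hB : 0 < B := by positivity
  have hnorm : ‖1 - (r : ℂ) * Complex.exp (-((ε * t : ℝ) : ℂ) * Complex.I)‖ ^ (2 : ℝ) =
      ε ^ 2 * B := by
    rw [Real.rpow_two, norm_one_sub_mul_exp_neg_mul_I_sq, Real.sin_eq_mul_sinc]
    ring
  have hpow : ‖1 - (r : ℂ) * Complex.exp (-((ε * t : ℝ) : ℂ) * Complex.I)‖ ^ (lam + 1) =
      ε ^ (lam + 1) * B ^ ((lam + 1) / 2) := by
    rw [show lam + 1 = 2 * ((lam + 1) / 2) by ring, Real.rpow_mul (norm_nonneg _), hnorm,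
      Real.mul_rpow (by positivity) hB.le, ← Real.rpow_natCast, ← Real.rpow_mul hε.le]
    norm_num
  rw [hpow, show 1 - r ^ 2 = (1 + r) * ε by ring, Real.mul_rpow (by positivity) hε.le,
    Real.rpow_add_one hε.ne', rescaledIntegrand, neg_div, Real.rpow_neg hB.le]
  field_simp

lemma Ilam_eq_integral_rescaledIntegrand {r : ℝ} (hr0 : 0 ≤ r) (hr1 : r < 1) (lam : ℝ) :
    Ilam lam r =
      1 / (2 * π) * ∫ t in -(π / (1 - r))..π / (1 - r), rescaledIntegrand lam r t := by
  set f : ℝ → ℝ := fun θ =>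
    (1 - r ^ 2) ^ lam / ‖1 - (r : ℂ) * Complex.exp (-(θ : ℂ) * Complex.I)‖ ^ (lam + 1)
  have hε : 1 - r ≠ 0 := (sub_pos.2 hr1).ne'
  have hper : Function.Periodic f (2 * π) := fun θ => by
    simp only [f]
    rw [Complex.ofReal_add, show -((θ : ℂ) + ((2 * π : ℝ) : ℂ)) * Complex.I =
      -(θ : ℂ) * Complex.I - 2 * π * Complex.I by push_cast; ring, Complex.exp_periodic.sub_eq]
  have hshift : ∫ θ in (0 : ℝ)..2 * π, f θ = ∫ θ in -π..π, f θ := by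
    simpa [show -π + 2 * π = π by ring] using hper.intervalIntegral_add_eq 0 (-π)
  have hscale : ∫ θ in -π..π, f θ =
      ∫ t in -(π / (1 - r))..π / (1 - r), (1 - r) * f ((1 - r) * t) := by
    rw [intervalIntegral.integral_const_mul, intervalIntegral.integral_comp_mul_left f hε,
      smul_eq_mul, mul_inv_cancel_left₀ hε, mul_neg, mul_div_cancel₀ _ hε]
  rw [Ilam, hshift, hscale]
  congr 1
  exact intervalIntegral.integral_congr fun t _ =>
    one_sub_mul_integrand_eq_rescaledIntegrand hr0 hr1 lam t

lemma rescaledIntegrand_nonneg {r : ℝ} (hr : 0 ≤ r) (lam t : ℝ) :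
    0 ≤ rescaledIntegrand lam r t := by
  unfold rescaledIntegrand
  positivity

lemma rescaledIntegrand_le {lam r t : ℝ} (hlam : 0 ≤ lam) (hr : 1 / 2 ≤ r) (hr1 : r ≤ 1)
    (ht : |(1 - r) * t| ≤ π) :
    rescaledIntegrand lam r t ≤
      2 ^ lam * (2 / π ^ 2) ^ (-(lam + 1) / 2) * (1 + t ^ 2) ^ (-(lam + 1) / 2) := by
  have hsinc : 4 / π ^ 2 ≤ Real.sinc ((1 - r) * t / 2) ^ 2 := by
    have h := Real.two_div_pi_le_abs_sinc (x := (1 - r) * t / 2)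
      (by rw [abs_div, abs_of_pos (two_pos : (0 : ℝ) < 2)]; linarith)
    rw [← sq_abs (Real.sinc _)]
    calc 4 / π ^ 2 = (2 / π) ^ 2 := by ring
      _ ≤ _ := pow_le_pow_left₀ (by positivity) h 2
  have hc : 2 / π ^ 2 ≤ 1 := by
    rw [div_le_one (by positivity)]
    nlinarith [two_le_pi]
  have hbase : 2 / π ^ 2 * (1 + t ^ 2) ≤ 1 + r * t ^ 2 * Real.sinc ((1 - r) * t / 2) ^ 2 := by
    have : 2 / π ^ 2 * t ^ 2 ≤ r * t ^ 2 * Real.sinc ((1 - r) * t / 2) ^ 2 := by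
      calc 2 / π ^ 2 * t ^ 2 = 1 / 2 * t ^ 2 * (4 / π ^ 2) := by ring
        _ ≤ _ := by gcongr
    nlinarith
  rw [rescaledIntegrand, mul_assoc (2 ^ lam), ← Real.mul_rpow (by positivity) (by positivity)]
  exact mul_le_mul (Real.rpow_le_rpow (by linarith) (by linarith) hlam)
    (Real.rpow_le_rpow_of_nonpos (by positivity) hbase (by linarith)) (by positivity)
    (by positivity)

lemma tendsto_rescaledIntegrand_one (lam t : ℝ) :
    Tendsto (fun r => rescaledIntegrand lam r t) (𝓝 1)
      (𝓝 (2 ^ lam * (1 + t ^ 2) ^ (-(lam + 1) / 2))) := by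
  have h : ContinuousAt (fun r => rescaledIntegrand lam r t) 1 := by
    unfold rescaledIntegrand
    refine ContinuousAt.mul ?_ ?_
    · exact ContinuousAt.rpow_const (by fun_prop) (Or.inl (by norm_num))
    · exact ContinuousAt.rpow_const (by fun_prop) (Or.inl (by positivity))
  simpa [rescaledIntegrand, one_add_one_eq_two] using h.tendsto

lemma tendsto_integral_rescaledIntegrand {lam : ℝ} (hlam : 0 < lam) :
    Tendsto (fun r => ∫ t in -(π / (1 - r))..π / (1 - r), rescaledIntegrand lam r t) (𝓝[<] 1)
      (𝓝 (∫ t, 2 ^ lam * (1 + t ^ 2) ^ (-(lam + 1) / 2))) := by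
  set F : ℝ → ℝ → ℝ := fun r => (Ioc (-(π / (1 - r))) (π / (1 - r))).indicator
    (rescaledIntegrand lam r)
  set bound : ℝ → ℝ := fun t =>
    2 ^ lam * (2 / π ^ 2) ^ (-(lam + 1) / 2) * (1 + t ^ 2) ^ (-(lam + 1) / 2)
  have hF : ∀ᶠ r in 𝓝[<] 1,
      ∫ t, F r t = ∫ t in -(π / (1 - r))..π / (1 - r), rescaledIntegrand lam r t := by
    filter_upwards [self_mem_nhdsWithin] with r (hr : r < 1)
    have : 0 ≤ π / (1 - r) := div_nonneg pi_pos.le (by linarith)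
    rw [intervalIntegral.integral_of_le (by linarith),
      MeasureTheory.integral_indicator measurableSet_Ioc]
  refine (MeasureTheory.tendsto_integral_filter_of_dominated_convergence bound
    ?_ ?_ ?_ ?_).congr' hF
  · refine Eventually.of_forall fun r =>
      (Measurable.indicator ?_ measurableSet_Ioc).aestronglyMeasurable
    unfold rescaledIntegrand
    fun_prop
  · filter_upwards [Ioo_mem_nhdsLT (show (1 / 2 : ℝ) < 1 by norm_num)] with r hr
    refine ae_of_all _ fun t => ?_
    by_cases ht : t ∈ Ioc (-(π / (1 - r))) (π / (1 - r))
    · have hε : 0 < 1 - r := by linarith [hr.2]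
      have hεt : |(1 - r) * t| ≤ π := by
        rw [abs_mul, abs_of_pos hε, ← le_div_iff₀' hε, abs_le]
        exact ⟨ht.1.le, ht.2⟩
      simp only [F, bound]
      rw [indicator_of_mem ht,
        Real.norm_of_nonneg (rescaledIntegrand_nonneg (by linarith [hr.1]) _ _)]
      exact rescaledIntegrand_le hlam.le hr.1.le hr.2.le hεt
    · simp only [F, bound]
      rw [indicator_of_notMem ht, norm_zero]
      positivity
  · have h := integrable_rpow_neg_one_add_norm_sq (E := ℝ) (μ := volume) (r := lam + 1)
      (by simp; linarith)
    simpa only [Real.norm_eq_abs, sq_abs, mul_assoc] using h.const_mul _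
  · refine ae_of_all _ fun t =>
      ((tendsto_rescaledIntegrand_one lam t).mono_left nhdsWithin_le_nhds).congr' ?_
    have hlim : Tendsto (fun r : ℝ => (1 - r) * |t|) (𝓝[<] 1) (𝓝 0) := by
      have : Tendsto (fun r : ℝ => (1 - r) * |t|) (𝓝 1) (𝓝 ((1 - 1) * |t|)) :=
        ((continuous_const.sub continuous_id).mul continuous_const).tendsto 1
      simpa using this.mono_left nhdsWithin_le_nhds
    filter_upwards [self_mem_nhdsWithin, hlim.eventually (gt_mem_nhds pi_pos)]
      with r (hr : r < 1) hrt
    have hε : 0 < 1 - r := by linarith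
    have ht : |t| < π / (1 - r) := by rw [lt_div_iff₀' hε]; exact hrt
    simp only [F]
    rw [indicator_of_mem (show t ∈ Ioc _ _ from ⟨(abs_lt.1 ht).1, (abs_lt.1 ht).2.le⟩)]

lemma Real.Gamma_div_Gamma_half_add_half_sq {s : ℝ} (hs : 0 < s) :
    Real.Gamma s / Real.Gamma (s / 2 + 1 / 2) ^ 2 =
      2 ^ s * √π * Real.Gamma (s / 2) / (2 * π * Real.Gamma ((s + 1) / 2)) := by
  have hdup := Real.Gamma_mul_Gamma_add_half (s / 2)
  rw [mul_div_cancel₀ s two_ne_zero, Real.rpow_sub two_pos, Real.rpow_one] at hdup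
  have hc : (2 : ℝ) ^ s * (2 / 2 ^ s) = 2 := mul_div_cancel₀ 2 (by positivity)
  have hπ : √π ^ 2 = π := Real.sq_sqrt pi_pos.le
  have hΓ : 0 < Real.Gamma (s / 2 + 1 / 2) := Real.Gamma_pos_of_pos (by positivity)
  rw [show (s + 1) / 2 = s / 2 + 1 / 2 by ring, div_eq_div_iff (by positivity) (by positivity)]
  linear_combination (-(2 ^ s * √π * Real.Gamma (s / 2 + 1 / 2))) * hdup
    - Real.Gamma s * Real.Gamma (s / 2 + 1 / 2) * √π ^ 2 * hc
    - 2 * Real.Gamma s * Real.Gamma (s / 2 + 1 / 2) * hπ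

theorem stmt2 (lam : ℝ) (hlam : 0 < lam) :
    Filter.Tendsto (fun r : ℝ => Ilam lam r) (nhdsWithin 1 (Set.Iio 1))
      (nhds (Real.Gamma lam / (Real.Gamma (lam / 2 + 1 / 2)) ^ 2)) := by
  have hlim := (tendsto_integral_rescaledIntegrand hlam).const_mul (1 / (2 * π))
  rw [MeasureTheory.integral_const_mul, integral_one_add_sq_rpow_neg (by linarith),
    add_sub_cancel_right] at hlim
  rw [Real.Gamma_div_Gamma_half_add_half_sq hlam]
  convert hlim.congr' ?_ using 2
  · ring
  · filter_upwards [Ioo_mem_nhdsLT one_pos] with r hr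
    exact (Ilam_eq_integral_rescaledIntegrand hr.1.le hr.2 lam).symm
end
end

section
/- The function K_{α,β}(z) = (1-|z|²)^{α+β+1} / ((1-z)^{α+1}(1-z̄)^{β+1}) is (α,β)-harmonic on the unit disc, i.e. it satisfies (1-|z|²) ∂_z ∂_{z̄} K_{α,β} + α z ∂_z K_{α,β} + β z̄ ∂_{z̄} K_{α,β} − αβ K_{α,β} = 0. -/
noncomputable section

open Complex MeasureTheory intervalIntegral Real Filter

/-!
Write `F = 1 - |z|²`, `G = 1 - z`, `H = 1 - z̄` and `c = α + β + 1`, so that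
`K = F^c / (G^(α+1) H^(β+1))`. Its Wirtinger derivatives are `∂_z K = K P` and `∂_z̄ K = K Q`
with the logarithmic derivatives `P = (α+1)/G - c z̄/F` and `Q = (β+1)/H - c z/F`, and
`∂_z Q = -c/F²`. Hence
`Δ_{α,β} K / (1 - |z|²) = K (F (P Q - c/F²) + α z P + β z̄ Q - α β)`, and the bracket vanishes
identically as a rational function of `z` and `z̄`.
-/

open ComplexConjugate Topology

/-- Every `ℝ`-linear endomorphism of `ℂ` is `v ↦ p v + q v̄`; for a derivative, `p = ∂_z` and
`q = ∂_z̄`. -/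
def wirtingerCLM (p q : ℂ) : ℂ →L[ℝ] ℂ :=
  p • ContinuousLinearMap.id ℝ ℂ + q • conjCLE.toContinuousLinearMap

@[simp]
lemma wirtingerCLM_apply (p q v : ℂ) : wirtingerCLM p q v = p * v + q * conj v := by
  simp [wirtingerCLM]

def HasWirtingerDerivAt (u : ℂ → ℂ) (p q z : ℂ) : Prop :=
  HasFDerivAt u (wirtingerCLM p q) z

lemma HasFDerivAt.hasWirtingerDerivAt {u : ℂ → ℂ} {L : ℂ →L[ℝ] ℂ} {p q z : ℂ}
    (h : HasFDerivAt u L z) (h1 : L 1 = p + q) (hI : L I = (p - q) * I) :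
    HasWirtingerDerivAt u p q z := by
  refine h.congr_fderiv (ContinuousLinearMap.coe_inj.1 (basisOneI.ext fun i => ?_))
  fin_cases i
  · simp [h1]
  · simp [hI]
    ring

namespace HasWirtingerDerivAt

variable {u v : ℂ → ℂ} {p q p' q' z : ℂ}

lemma wdz_eq (h : HasWirtingerDerivAt u p q z) : wdz u z = p := by
  rw [wdz, h.fderiv]
  simp only [wirtingerCLM_apply, map_one, conj_I]
  linear_combination (q / 2 - p / 2) * I_sq

lemma wdzbar_eq (h : HasWirtingerDerivAt u p q z) : wdzbar u z = q := by
  rw [wdzbar, h.fderiv]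
  simp only [wirtingerCLM_apply, map_one, conj_I]
  linear_combination (p / 2 - q / 2) * I_sq

lemma congr_deriv (h : HasWirtingerDerivAt u p q z) (hp : p = p') (hq : q = q') :
    HasWirtingerDerivAt u p' q' z :=
  hp ▸ hq ▸ h

lemma congr_of_eventuallyEq (h : HasWirtingerDerivAt u p q z) (huv : v =ᶠ[𝓝 z] u) :
    HasWirtingerDerivAt v p q z :=
  HasFDerivAt.congr_of_eventuallyEq h huv

lemma sub (hu : HasWirtingerDerivAt u p q z) (hv : HasWirtingerDerivAt v p' q' z) :
    HasWirtingerDerivAt (fun w => u w - v w) (p - p') (q - q') z :=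
  HasFDerivAt.hasWirtingerDerivAt (HasFDerivAt.sub hu hv) (by simp; ring) (by simp; ring)

lemma mul (hu : HasWirtingerDerivAt u p q z) (hv : HasWirtingerDerivAt v p' q' z) :
    HasWirtingerDerivAt (fun w => u w * v w) (u z * p' + v z * p) (u z * q' + v z * q) z :=
  HasFDerivAt.hasWirtingerDerivAt (HasFDerivAt.mul hu hv) (by simp; ring) (by simp; ring)

lemma div (hu : HasWirtingerDerivAt u p q z) (hv : HasWirtingerDerivAt v p' q' z)
    (hv0 : v z ≠ 0) :
    HasWirtingerDerivAt (fun w => u w / v w)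
      ((v z * p - u z * p') / v z ^ 2) ((v z * q - u z * q') / v z ^ 2) z := by
  have hinv : HasWirtingerDerivAt (fun w => (v w)⁻¹) (-p' / v z ^ 2) (-q' / v z ^ 2) z :=
    HasFDerivAt.hasWirtingerDerivAt
      (((hasDerivAt_inv hv0).hasFDerivAt.restrictScalars ℝ).comp z hv)
      (by simp; ring) (by simp; ring)
  convert hu.mul hinv using 1 <;> field_simp <;> ring

lemma cpow_const (hu : HasWirtingerDerivAt u p q z) (hs : u z ∈ slitPlane) (e : ℂ) :
    HasWirtingerDerivAt (fun w => u w ^ e) (e * u z ^ (e - 1) * p) (e * u z ^ (e - 1) * q) z :=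
  HasFDerivAt.hasWirtingerDerivAt
    (((hasStrictDerivAt_cpow_const hs).hasDerivAt.hasFDerivAt.restrictScalars ℝ).comp z hu)
    (by simp; ring) (by simp; ring)

end HasWirtingerDerivAt

lemma hasWirtingerDerivAt_id (z : ℂ) : HasWirtingerDerivAt (fun w => w) 1 0 z :=
  (hasFDerivAt_id z).hasWirtingerDerivAt (by simp) (by simp)

lemma hasWirtingerDerivAt_conj (z : ℂ) : HasWirtingerDerivAt (fun w => conj w) 0 1 z :=
  conjCLE.hasFDerivAt.hasWirtingerDerivAt (by simp) (by simp)

lemma hasWirtingerDerivAt_const (c z : ℂ) : HasWirtingerDerivAt (fun _ => c) 0 0 z :=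
  (hasFDerivAt_const c z).hasWirtingerDerivAt (by simp) (by simp)

lemma one_sub_mem_slitPlane {w : ℂ} (hw : ‖w‖ < 1) : 1 - w ∈ slitPlane := by
  simpa [sub_eq_add_neg] using mem_slitPlane_of_norm_lt_one (z := -w) (by simpa using hw)

lemma one_sub_mul_conj_mem_slitPlane {z : ℂ} (hz : ‖z‖ < 1) : 1 - z * conj z ∈ slitPlane :=
  one_sub_mem_slitPlane <| by
    simpa using mul_lt_one_of_nonneg_of_lt_one_left (norm_nonneg z) hz hz.le

lemma ofReal_norm_sq_eq_mul_conj (z : ℂ) : (‖z‖ : ℂ) ^ 2 = z * conj z := by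
  rw [mul_conj, normSq_eq_norm_sq, ofReal_pow]

section Kernel

variable (a b : ℝ)

lemma Kab_eq_div : Kab a b = fun w =>
    (1 - w * conj w) ^ ((a + b + 1 : ℝ) : ℂ) /
      ((1 - w) ^ ((a + 1 : ℝ) : ℂ) * (1 - conj w) ^ ((b + 1 : ℝ) : ℂ)) := by
  ext w
  rw [Kab, ofReal_norm_sq_eq_mul_conj]

def kabLogWdz (w : ℂ) : ℂ :=
  (a + 1) / (1 - w) - (a + b + 1) * conj w / (1 - w * conj w)

def kabLogWdzbar (w : ℂ) : ℂ :=
  (b + 1) / (1 - conj w) - (a + b + 1) * w / (1 - w * conj w)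

variable {a b} {z : ℂ}

lemma hasWirtingerDerivAt_Kab (hz : ‖z‖ < 1) :
    HasWirtingerDerivAt (Kab a b) (Kab a b z * kabLogWdz a b z)
      (Kab a b z * kabLogWdzbar a b z) z := by
  have hF := one_sub_mul_conj_mem_slitPlane hz
  have hG : 1 - z ∈ slitPlane := one_sub_mem_slitPlane hz
  have hH : 1 - conj z ∈ slitPlane := one_sub_mem_slitPlane (by simpa using hz)
  have hdF := ((hasWirtingerDerivAt_const 1 z).sub
    ((hasWirtingerDerivAt_id z).mul (hasWirtingerDerivAt_conj z))).cpow_const hF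
      ((a + b + 1 : ℝ) : ℂ)
  have hdG := ((hasWirtingerDerivAt_const 1 z).sub (hasWirtingerDerivAt_id z)).cpow_const hG
    ((a + 1 : ℝ) : ℂ)
  have hdH := ((hasWirtingerDerivAt_const 1 z).sub (hasWirtingerDerivAt_conj z)).cpow_const hH
    ((b + 1 : ℝ) : ℂ)
  have hF0 := slitPlane_ne_zero hF
  have hG0 := slitPlane_ne_zero hG
  have hH0 := slitPlane_ne_zero hH
  have hGe : (1 - z) ^ ((a + 1 : ℝ) : ℂ) ≠ 0 := cpow_ne_zero_iff.2 (Or.inl hG0)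
  have hHe : (1 - conj z) ^ ((b + 1 : ℝ) : ℂ) ≠ 0 := cpow_ne_zero_iff.2 (Or.inl hH0)
  rw [Kab_eq_div]
  refine (hdF.div (hdG.mul hdH) (mul_ne_zero hGe hHe)).congr_deriv ?_ ?_ <;>
    simp only [kabLogWdz, kabLogWdzbar, cpow_sub _ _ hF0, cpow_sub _ _ hG0, cpow_sub _ _ hH0,
      cpow_one] <;>
    field_simp <;> push_cast <;> ring

lemma hasWirtingerDerivAt_kabLogWdzbar (hz : ‖z‖ < 1) :
    HasWirtingerDerivAt (kabLogWdzbar a b) (-(a + b + 1) / (1 - z * conj z) ^ 2)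
      ((b + 1) / (1 - conj z) ^ 2 - (a + b + 1) * z ^ 2 / (1 - z * conj z) ^ 2) z := by
  have hF0 := slitPlane_ne_zero (one_sub_mul_conj_mem_slitPlane hz)
  have hH0 : 1 - conj z ≠ 0 := slitPlane_ne_zero (one_sub_mem_slitPlane (by simpa using hz))
  have hdF := (hasWirtingerDerivAt_const 1 z).sub
    ((hasWirtingerDerivAt_id z).mul (hasWirtingerDerivAt_conj z))
  have hdH := (hasWirtingerDerivAt_const 1 z).sub (hasWirtingerDerivAt_conj z)
  refine (((hasWirtingerDerivAt_const ((b : ℂ) + 1) z).div hdH hH0).sub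
    (((hasWirtingerDerivAt_const ((a : ℂ) + b + 1) z).mul (hasWirtingerDerivAt_id z)).div
      hdF hF0)).congr_deriv ?_ ?_ <;>
    field_simp <;> ring

end Kernel

theorem stmt7 (a b : ℝ) (z : ℂ) (hz : ‖z‖ < 1) :
    (1 - (‖z‖ : ℂ) ^ 2) * wdz (wdzbar (Kab a b)) z + (a : ℂ) * z * wdz (Kab a b) z +
        (b : ℂ) * (starRingEnd ℂ) z * wdzbar (Kab a b) z - (a : ℂ) * (b : ℂ) * Kab a b z = 0 := by
  have hK := hasWirtingerDerivAt_Kab (a := a) (b := b) hz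
  have hwdzbar : wdzbar (Kab a b) =ᶠ[𝓝 z] fun w => Kab a b w * kabLogWdzbar a b w :=
    ((isOpen_lt continuous_norm continuous_const).eventually_mem hz).mono
      fun w hw => (hasWirtingerDerivAt_Kab hw).wdzbar_eq
  have hK2 := ((hK.mul (hasWirtingerDerivAt_kabLogWdzbar hz)).congr_of_eventuallyEq hwdzbar).wdz_eq
  have hF0 := slitPlane_ne_zero (one_sub_mul_conj_mem_slitPlane hz)
  have hG0 : 1 - z ≠ 0 := slitPlane_ne_zero (one_sub_mem_slitPlane hz)
  have hH0 : 1 - conj z ≠ 0 := slitPlane_ne_zero (one_sub_mem_slitPlane (by simpa using hz))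
  rw [hK2, hK.wdz_eq, hK.wdzbar_eq, ofReal_norm_sq_eq_mul_conj]
  simp only [kabLogWdz, kabLogWdzbar]
  field_simp
  ring
end
end
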